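/- arXiv:1806.10020 — 4 statements merged into one kernel-verified Lean document; each statement's English description precedes it below -/
import Mathlib

section
/- If λ ∈ ℂ satisfies (|λ - r₁|⋯|λ - r_l|)^{1/l} > (|s₁|⋯|s_{l'}|)^{1/l'}, then the operator B - λI is boundedly invertible on c₀; i.e., λ belongs to the resolvent set of B acting on c₀. -/
/-!
The hypothesis forces `λ ≠ r_i`, so multiplication `D` by the periodic sequence `(λ - r_k)⁻¹` is
invertible on `c₀`, and `D (λ - B) = 1 - N` for the weighted forward shift `N` with weights
`w_k = s_k / (λ - r_{k+1})`. These weights are periodic with period `l l'`, so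
`‖N ^ (l l')‖ ≤ (∏ |s_j|) ^ l / (∏ |λ - r_i|) ^ l'`, which is `< 1` by hypothesis. Hence `1 - N`,
and with it `λ - B`, is invertible.
-/

open Filter Topology
open Fin.NatCast
open scoped ZeroAtInfty BoundedContinuousFunction

theorem isUnit_one_sub_of_norm_pow_lt_one {R : Type*} [NormedRing R] [HasSummableGeomSeries R]
    {a : R} {n : ℕ} (h : ‖a ^ n‖ < 1) : IsUnit (1 - a) := by
  have hcomm : Commute (1 - a) (∑ i ∈ Finset.range n, a ^ i) :=
    (mul_neg_geom_sum a n).trans (geom_sum_mul_neg a n).symm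
  have hunit : IsUnit ((1 - a) * ∑ i ∈ Finset.range n, a ^ i) := by
    rw [mul_neg_geom_sum]
    exact (Units.oneSub _ h).isUnit
  exact (hcomm.isUnit_mul_iff.mp hunit).1

theorem Real.pow_lt_pow_of_rpow_inv_lt {a b : ℝ} (ha : 0 ≤ a) (hb : 0 ≤ b) {m n : ℕ}
    (hm : m ≠ 0) (hn : n ≠ 0) (h : a ^ ((m : ℝ)⁻¹) < b ^ ((n : ℝ)⁻¹)) : a ^ n < b ^ m := by
  calc a ^ n = ((a ^ ((m : ℝ)⁻¹)) ^ m) ^ n := by rw [Real.rpow_inv_natCast_pow ha hm]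
    _ = (a ^ ((m : ℝ)⁻¹)) ^ (n * m) := by rw [← pow_mul, mul_comm]
    _ < (b ^ ((n : ℝ)⁻¹)) ^ (n * m) :=
      pow_lt_pow_left₀ h (Real.rpow_nonneg ha _) (Nat.mul_ne_zero hn hm)
    _ = b ^ m := by rw [pow_mul, Real.rpow_inv_natCast_pow hb hn]

theorem Fin.prod_range_add_natCast {M : Type*} [CommMonoid M] {p : ℕ} [NeZero p]
    (F : Fin p → M) (m : ℕ) : ∏ i ∈ Finset.range p, F ↑(m + i) = ∏ j, F j := by
  rw [← Fin.prod_univ_eq_prod_range (fun i => F ↑(m + i))]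
  simp only [Nat.cast_add, Fin.cast_val_eq_self]
  exact Equiv.prod_comp (Equiv.addLeft (m : Fin p)) F

theorem Fin.prod_range_mul_add_natCast {M : Type*} [CommMonoid M] {p : ℕ} [NeZero p]
    (F : Fin p → M) (c m : ℕ) : ∏ i ∈ Finset.range (c * p), F ↑(m + i) = (∏ j, F j) ^ c := by
  induction c with
  | zero => simp
  | succ c ih =>
    rw [Nat.succ_mul, Finset.prod_range_add, ih, pow_succ,
      ← Fin.prod_range_add_natCast F (m + c * p)]
    simp only [add_assoc]

theorem Fin.prod_range_mul_add_natCast_mul {M : Type*} [CommMonoid M] {p q : ℕ} [NeZero p]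
    [NeZero q] (F : Fin p → M) (G : Fin q → M) (a b : ℕ) :
    ∏ i ∈ Finset.range (p * q), F ↑(a + i) * G ↑(b + i) = (∏ j, F j) ^ q * (∏ j, G j) ^ p := by
  rw [Finset.prod_mul_distrib, ← Fin.prod_range_mul_add_natCast F q a,
    ← Fin.prod_range_mul_add_natCast G p b, mul_comm q p]

namespace ZeroAtInftyContinuousMap

variable {α β 𝕜 : Type*} [TopologicalSpace α] [SeminormedAddCommGroup β] [NormedField 𝕜]

lemma norm_apply_le (f : C₀(α, β)) (x : α) : ‖f x‖ ≤ ‖f‖ := by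
  rw [← norm_toBCF_eq_norm]
  exact f.toBCF.norm_coe_le_norm x

lemma norm_le {f : C₀(α, β)} {C : ℝ} (hC : 0 ≤ C) : ‖f‖ ≤ C ↔ ∀ x, ‖f x‖ ≤ C := by
  rw [← norm_toBCF_eq_norm]
  exact BoundedContinuousFunction.norm_le hC

noncomputable def mulBounded : (α →ᵇ 𝕜) →* (C₀(α, 𝕜) →L[𝕜] C₀(α, 𝕜)) where
  toFun g := LinearMap.mkContinuous
    { toFun := fun f => ⟨⟨fun x => g x * f x, by fun_prop⟩,
        isBoundedUnder_le_mul_tendsto_zero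
          (isBoundedUnder_of ⟨‖g‖, fun x => g.norm_coe_le_norm x⟩) f.zero_at_infty'⟩
      map_add' := fun f f' => ext fun x => mul_add (g x) (f x) (f' x)
      map_smul' := fun c f => ext fun x => mul_left_comm (g x) c (f x) }
    ‖g‖ fun f => (norm_le (by positivity)).2 fun x =>
      (norm_mul_le _ _).trans (mul_le_mul (g.norm_coe_le_norm x) (norm_apply_le f x)
        (norm_nonneg _) (norm_nonneg _))
  map_one' := ContinuousLinearMap.ext fun f => ext fun x => one_mul (f x)
  map_mul' g h := ContinuousLinearMap.ext fun f => ext fun x => mul_assoc (g x) (h x) (f x)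

@[simp] lemma mulBounded_apply (g : α →ᵇ 𝕜) (f : C₀(α, 𝕜)) (x : α) :
    mulBounded g f x = g x * f x := rfl

end ZeroAtInftyContinuousMap

section WeightedShift

variable {𝕜 : Type*} [NontriviallyNormedField 𝕜]

def IsWeightedShift (T : C₀(ℕ, 𝕜) →L[𝕜] C₀(ℕ, 𝕜)) (w : ℕ → 𝕜) : Prop :=
  (∀ f, T f 0 = 0) ∧ ∀ f k, T f (k + 1) = w k * f k

namespace IsWeightedShift

variable {T : C₀(ℕ, 𝕜) →L[𝕜] C₀(ℕ, 𝕜)} {w : ℕ → 𝕜}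

lemma pow_apply_of_lt (hT : IsWeightedShift T w) {n k : ℕ} (hk : k < n) (f : C₀(ℕ, 𝕜)) :
    (T ^ n) f k = 0 := by
  induction n generalizing k with
  | zero => omega
  | succ n ih =>
    rw [pow_succ', mul_apply_eq_comp]
    cases k with
    | zero => exact hT.1 _
    | succ k => rw [hT.2, ih (by omega), mul_zero]

lemma pow_apply_add (hT : IsWeightedShift T w) (n m : ℕ) (f : C₀(ℕ, 𝕜)) :
    (T ^ n) f (m + n) = (∏ i ∈ Finset.range n, w (m + i)) * f m := by
  induction n with
  | zero => simp
  | succ n ih =>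
    rw [pow_succ', mul_apply_eq_comp, ← add_assoc, hT.2, ih, Finset.prod_range_succ]
    ring

lemma norm_pow_le (hT : IsWeightedShift T w) {n : ℕ} {C : ℝ}
    (hC : ∀ m, ∏ i ∈ Finset.range n, ‖w (m + i)‖ ≤ C) : ‖T ^ n‖ ≤ C := by
  have hC0 : 0 ≤ C := (Finset.prod_nonneg fun i _ => norm_nonneg _).trans (hC 0)
  refine ContinuousLinearMap.opNorm_le_bound _ hC0 fun f =>
    (ZeroAtInftyContinuousMap.norm_le (by positivity)).2 fun k => ?_
  rcases lt_or_ge k n with hk | hk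
  · rw [hT.pow_apply_of_lt hk, norm_zero]
    positivity
  · obtain ⟨m, rfl⟩ := Nat.exists_eq_add_of_le' hk
    rw [hT.pow_apply_add, norm_mul, norm_prod]
    exact mul_le_mul (hC m) (f.norm_apply_le m) (norm_nonneg _) hC0

end IsWeightedShift

open ZeroAtInftyContinuousMap in
lemma isWeightedShift_one_sub_mulBounded_mul_smul_one_sub {B : C₀(ℕ, 𝕜) →L[𝕜] C₀(ℕ, 𝕜)}
    {ρ σ : ℕ → 𝕜} (hB0 : ∀ f, B f 0 = ρ 0 * f 0)
    (hB : ∀ f k, B f (k + 1) = σ k * f k + ρ (k + 1) * f (k + 1)) {lam : 𝕜} {g : ℕ →ᵇ 𝕜}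
    (hg : ∀ k, g k * (lam - ρ k) = 1) :
    IsWeightedShift (1 - mulBounded g * (lam • 1 - B)) fun k => g (k + 1) * σ k := by
  refine ⟨fun f => ?_, fun f k => ?_⟩ <;>
    simp only [_root_.sub_apply, one_apply_eq_self, _root_.smul_apply, mul_apply_eq_comp,
      mulBounded_apply, ZeroAtInftyContinuousMap.sub_apply, ZeroAtInftyContinuousMap.smul_apply,
      hB0, hB]
  · linear_combination (-f 0) * hg 0
  · linear_combination (-f (k + 1)) * hg (k + 1)

end WeightedShift

namespace BoundedContinuousFunction

variable {β : Type*} [PseudoMetricSpace β]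

noncomputable def ofFinPeriodic {p : ℕ} [NeZero p] (F : Fin p → β) : ℕ →ᵇ β :=
  (mkOfCompact ⟨F, continuous_of_discreteTopology⟩).compContinuous
    ⟨fun k : ℕ => (k : Fin p), continuous_of_discreteTopology⟩

@[simp] lemma ofFinPeriodic_apply {p : ℕ} [NeZero p] (F : Fin p → β) (k : ℕ) :
    ofFinPeriodic F k = F k := rfl

end BoundedContinuousFunction

open ZeroAtInftyContinuousMap BoundedContinuousFunction

theorem stmt_2_general (l l' : ℕ) [NeZero l] [NeZero l'] (r : Fin l → ℂ) (s : Fin l' → ℂ)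
    (B : ZeroAtInftyContinuousMap ℕ ℂ →L[ℂ] ZeroAtInftyContinuousMap ℕ ℂ)
    (hB0 : ∀ x : ZeroAtInftyContinuousMap ℕ ℂ, B x 0 = r 0 * x 0)
    (hB : ∀ (x : ZeroAtInftyContinuousMap ℕ ℂ) (k : ℕ),
      B x (k + 1) = s (↑k) * x k + r (↑(k + 1)) * x (k + 1))
    (lam : ℂ)
    (hlam : (∏ j, ‖s j‖) ^ ((1 : ℝ) / l') <
      (∏ i, ‖lam - r i‖) ^ ((1 : ℝ) / l)) :
    lam ∉ spectrum ℂ B := by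
  have hlt : (∏ j, ‖s j‖) ^ l < (∏ i, ‖lam - r i‖) ^ l' := by
    refine Real.pow_lt_pow_of_rpow_inv_lt (by positivity) (by positivity)
      (NeZero.ne l') (NeZero.ne l) ?_
    simpa only [one_div] using hlam
  have hr : ∀ i, lam - r i ≠ 0 := fun i hi => by
    rw [Finset.prod_eq_zero (Finset.mem_univ i) (by simp [hi]), zero_pow (NeZero.ne l')] at hlt
    exact hlt.not_ge (by positivity)
  obtain ⟨D, hD⟩ : IsUnit (mulBounded (ofFinPeriodic fun i => (lam - r i)⁻¹)) :=
    (IsUnit.of_mul_eq_one (ofFinPeriodic fun i => lam - r i)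
      (by ext k; simp [hr])).map mulBounded
  have hN := isWeightedShift_one_sub_mulBounded_mul_smul_one_sub (ρ := fun k => r k)
    (g := ofFinPeriodic fun i => (lam - r i)⁻¹) (fun f => by rw [hB0, Nat.cast_zero]) hB
    fun k => inv_mul_cancel₀ (hr k)
  rw [spectrum.notMem_iff, Algebra.algebraMap_eq_smul_one, ← D.isUnit_units_mul, hD,
    ← sub_sub_cancel 1 (mulBounded _ * _)]
  refine isUnit_one_sub_of_norm_pow_lt_one (R := C₀(ℕ, ℂ) →L[ℂ] C₀(ℕ, ℂ)) (n := l * l')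
    ((hN.norm_pow_le (C := (∏ i, ‖(lam - r i)⁻¹‖) ^ l' * (∏ j, ‖s j‖) ^ l)
      fun m => le_of_eq ?_).trans_lt ?_)
  · simp_rw [norm_mul, ofFinPeriodic_apply, add_right_comm m _ 1]
    exact Fin.prod_range_mul_add_natCast_mul (fun i => ‖(lam - r i)⁻¹‖) (fun j => ‖s j‖) _ _
  · simp_rw [norm_inv, Finset.prod_inv_distrib, inv_pow]
    rw [inv_mul_lt_one₀ (hlt.trans_le' (by positivity))]
    exact hlt

/-- If `(|λ-r₁|⋯|λ-r_l|)^{1/l} > (|s₁|⋯|s_{l'}|)^{1/l'}`, then `λ` belongs to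
the resolvent set of the operator `B` on `c₀`. -/
theorem stmt_2 (l l' : ℕ) [NeZero l] [NeZero l'] (r : Fin l → ℂ) (s : Fin l' → ℂ)
    (hs : ∀ j, s j ≠ 0)
    (B : ZeroAtInftyContinuousMap ℕ ℂ →L[ℂ] ZeroAtInftyContinuousMap ℕ ℂ)
    (hB0 : ∀ x : ZeroAtInftyContinuousMap ℕ ℂ, B x 0 = r 0 * x 0)
    (hB : ∀ (x : ZeroAtInftyContinuousMap ℕ ℂ) (k : ℕ),
      B x (k + 1) = s (↑k) * x k + r (↑(k + 1)) * x (k + 1))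
    (lam : ℂ)
    (hlam : (∏ j, ‖s j‖) ^ ((1 : ℝ) / l') <
      (∏ i, ‖lam - r i‖) ^ ((1 : ℝ) / l)) :
    lam ∉ spectrum ℂ B :=
  stmt_2_general l l' r s B hB0 hB lam hlam
end

section
/- The point spectrum of B on c₀ is empty: no complex number λ admits a nonzero sequence x ∈ c₀ with Bx = λx. -/
/-!
Let `x` be an eigenvector for `λ` and `m` its first nonzero index. Row `m` of `Bx = λx` forces
`λ = r_m`. Row `k + 1` reads `(λ - r_{k+1}) x_{k+1} = s_k x_k`, so since every `s_k` is nonzero,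
`x_k ≠ 0` implies `x_{k+1} ≠ 0` and `x` never vanishes beyond `m`. But by periodicity
`r_{m+l} = r_m = λ`, so row `m + l` gives `s_{m+l-1} x_{m+l-1} = 0`, a contradiction.
-/

namespace LowerBidiagonal

variable {R : Type*} [CommRing R] [NoZeroDivisors R] {r s x : ℕ → R} {lam : R}

theorem ne_zero_succ_of_ne_zero
    (hsucc : ∀ k, s k * x k + r (k + 1) * x (k + 1) = lam * x (k + 1))
    {k : ℕ} (hs : s k ≠ 0) (hx : x k ≠ 0) : x (k + 1) ≠ 0 := by
  intro hzero
  have h := hsucc k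
  rw [hzero, mul_zero, mul_zero, add_zero] at h
  exact mul_ne_zero hs hx h

theorem ne_zero_of_le
    (hsucc : ∀ k, s k * x k + r (k + 1) * x (k + 1) = lam * x (k + 1))
    (hs : ∀ k, s k ≠ 0) {m : ℕ} (hm : x m ≠ 0) {n : ℕ} (hmn : m ≤ n) : x n ≠ 0 := by
  induction n, hmn using Nat.le_induction with
  | base => exact hm
  | succ n _ ih => exact ne_zero_succ_of_ne_zero hsucc (hs n) ih

theorem eq_of_first_ne_zero (h0 : r 0 * x 0 = lam * x 0)
    (hsucc : ∀ k, s k * x k + r (k + 1) * x (k + 1) = lam * x (k + 1))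
    {m : ℕ} (hm : x m ≠ 0) (hmin : ∀ k < m, x k = 0) : lam = r m := by
  cases m with
  | zero => exact (mul_right_cancel₀ hm h0).symm
  | succ k =>
    have h := hsucc k
    rw [hmin k k.lt_succ_self, mul_zero, zero_add] at h
    exact (mul_right_cancel₀ hm h).symm

theorem eq_zero_of_periodic {p : ℕ} (hr : Function.Periodic r p) (hp : p ≠ 0)
    (hs : ∀ k, s k ≠ 0) (h0 : r 0 * x 0 = lam * x 0)
    (hsucc : ∀ k, s k * x k + r (k + 1) * x (k + 1) = lam * x (k + 1)) : x = 0 := by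
  classical
  by_contra hx
  have hex : ∃ k, x k ≠ 0 := by simpa [funext_iff] using hx
  set m := Nat.find hex
  have hlam : lam = r m :=
    eq_of_first_ne_zero h0 hsucc (Nat.find_spec hex) fun k hk => not_not.mp (Nat.find_min hex hk)
  obtain ⟨q, rfl⟩ := Nat.exists_eq_succ_of_ne_zero hp
  have hrow := hsucc (m + q)
  rw [show m + q + 1 = m + (q + 1) from rfl, hr m, ← hlam, add_eq_right] at hrow
  exact mul_ne_zero (hs _) (ne_zero_of_le hsucc hs (Nat.find_spec hex) (m.le_add_right q)) hrow

end LowerBidiagonal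

open Fin.NatCast in
/-- The point spectrum of `B` on `c₀` is empty: no `λ ∈ ℂ` admits a nonzero
`x ∈ c₀` with `Bx = λx`. -/
theorem stmt_4 (l l' : ℕ) [NeZero l] [NeZero l'] (r : Fin l → ℂ) (s : Fin l' → ℂ)
    (hs : ∀ j, s j ≠ 0)
    (B : ZeroAtInftyContinuousMap ℕ ℂ →L[ℂ] ZeroAtInftyContinuousMap ℕ ℂ)
    (hB0 : ∀ x : ZeroAtInftyContinuousMap ℕ ℂ, B x 0 = r 0 * x 0)
    (hB : ∀ (x : ZeroAtInftyContinuousMap ℕ ℂ) (k : ℕ),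
      B x (k + 1) = s (↑k) * x k + r (↑(k + 1)) * x (k + 1)) :
    ¬ ∃ (lam : ℂ) (x : ZeroAtInftyContinuousMap ℕ ℂ), x ≠ 0 ∧ B x = lam • x := by
  rintro ⟨lam, x, hx, hBx⟩
  have hrow (k : ℕ) : B x k = lam * x k := by rw [hBx]; rfl
  have hzero : (x : ℕ → ℂ) = 0 :=
    LowerBidiagonal.eq_zero_of_periodic (r := fun k => r k) (s := fun k => s k)
      (fun k => congrArg r (by simp)) (NeZero.ne l) (fun k => hs _)
      (by simpa [hrow] using (hB0 x).symm) (fun k => by rw [← hB, hrow])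
  exact hx (DFunLike.coe_injective hzero)
end

section
/- The point spectrum of the adjoint B* acting on ℓ¹ (identified with the dual of c₀) equals {λ ∈ ℂ : (|λ - r₁|⋯|λ - r_l|)^{1/l} < (|s₁|⋯|s_{l'}|)^{1/l'}}. That is, λ is an eigenvalue of the transposed matrix B^T acting on ℓ¹ if and only if this strict inequality holds. -/
/-!
An eigenvector of `B*` satisfies `s_k x_{k+1} = (λ - r_k) x_k`, so it is determined by `x₀`, and
`x_k = ∏_{j<k} (λ - r_j) / s_j` is one. Since `r` and `s` are periodic, `l·l'` steps of the
recursion multiply `x` by `μ = (∏ (λ - r_i))^{l'} / (∏ s_j)^l`, so a nonzero solution is summable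
exactly when `|μ| < 1`, i.e. when `(∏ |λ - r_i|)^{l'} < (∏ |s_j|)^l`.
-/

open Fin.NatCast

section PeriodicRatio

variable {𝕜 E : Type*} [NormedField 𝕜] [NormedAddCommGroup E] [NormedSpace 𝕜 E]

theorem eq_pow_smul_of_add_period_eq_smul {L : ℕ} {μ : 𝕜} {x : ℕ → E}
    (h : ∀ k, x (k + L) = μ • x k) (m i : ℕ) : x (m * L + i) = μ ^ m • x i := by
  induction m with
  | zero => simp
  | succ m ih => rw [Nat.succ_mul, Nat.add_right_comm, h, ih, pow_succ', mul_smul]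

theorem summable_norm_iff_of_add_period_eq_smul {L : ℕ} [NeZero L] {μ : 𝕜} {x : ℕ → E}
    (h : ∀ k, x (k + L) = μ • x k) :
    Summable (fun k ↦ ‖x k‖) ↔ ‖μ‖ < 1 ∨ x = 0 := by
  have hblocks : ∀ p : ℕ × Fin L, ‖x ((Nat.divModEquiv L).symm p)‖ = ‖μ‖ ^ p.1 * ‖x p.2‖ := by
    rintro ⟨m, i⟩
    simp [eq_pow_smul_of_add_period_eq_smul h, norm_smul]
  rw [← (Nat.divModEquiv L).symm.summable_iff, Function.comp_def]
  simp only [hblocks]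
  rw [summable_prod_of_nonneg fun _ ↦ by positivity]
  simp only [tsum_fintype, ← Finset.mul_sum]
  by_cases hC : ∑ i : Fin L, ‖x i‖ = 0
  · have hx : x = 0 := by
      have hfirst : ∀ i : Fin L, x i = 0 := fun i ↦
        norm_eq_zero.mp ((Finset.sum_eq_zero_iff_of_nonneg fun _ _ ↦ norm_nonneg _).mp hC i
          (Finset.mem_univ i))
      funext k
      rw [← (Nat.divModEquiv L).symm_apply_apply k, Nat.divModEquiv_symm_apply,
        eq_pow_smul_of_add_period_eq_smul h, hfirst, smul_zero, Pi.zero_apply]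
    simp [hx, summable_zero]
  · have hx : x ≠ 0 := by rintro rfl; simp at hC
    simp [hx, summable_mul_right_iff hC, summable_geometric_iff_norm_lt_one, Summable.of_finite]

end PeriodicRatio

section Products

variable {M : Type*} [CommMonoid M]

theorem prod_range_natCast_add {n : ℕ} [NeZero n] (H : Fin n → M) (k : ℕ) :
    ∏ j ∈ Finset.range n, H ((k + j : ℕ) : Fin n) = ∏ i, H i := by
  calc ∏ j ∈ Finset.range n, H ((k + j : ℕ) : Fin n)
      = ∏ i : Fin n, H ((k : Fin n) + ((i : ℕ) : Fin n)) := by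
        rw [← Fin.prod_univ_eq_prod_range]; push_cast; rfl
    _ = ∏ i, H i := by
        simp only [Fin.cast_val_eq_self]; exact Equiv.prod_comp (Equiv.addLeft (k : Fin n)) H

theorem prod_range_mul_natCast_add {n : ℕ} [NeZero n] (H : Fin n → M) (k c : ℕ) :
    ∏ j ∈ Finset.range (c * n), H ((k + j : ℕ) : Fin n) = (∏ i, H i) ^ c := by
  induction c with
  | zero => simp
  | succ c ih =>
    rw [Nat.succ_mul, Finset.prod_range_add, ih, pow_succ, ← prod_range_natCast_add H (k + c * n)]
    simp only [Nat.add_assoc]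

theorem prod_range_mul_eq_of_mul_succ_eq {α β y : ℕ → M} (h : ∀ k, β k * y (k + 1) = α k * y k)
    (k n : ℕ) :
    (∏ j ∈ Finset.range n, β (k + j)) * y (k + n) = (∏ j ∈ Finset.range n, α (k + j)) * y k := by
  induction n with
  | zero => simp
  | succ n ih =>
    rw [Finset.prod_range_succ, Finset.prod_range_succ, mul_assoc, ← Nat.add_assoc, h,
      mul_left_comm, ih, mul_left_comm, mul_assoc]

end Products

theorem mul_succ_prod_range_div {K : Type*} [Field K] {α β : ℕ → K} (hβ : ∀ k, β k ≠ 0) (k : ℕ) :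
    β k * ∏ j ∈ Finset.range (k + 1), α j / β j = α k * ∏ j ∈ Finset.range k, α j / β j := by
  rw [Finset.prod_range_succ]
  field_simp [hβ k]

theorem memℓp_one_iff_summable_norm {ι : Type*} {E : ι → Type*} [∀ i, NormedAddCommGroup (E i)]
    {x : ∀ i, E i} : Memℓp x 1 ↔ Summable fun i ↦ ‖x i‖ := by
  simp [memℓp_gen_iff (p := 1) (by norm_num)]

theorem rpow_one_div_lt_rpow_one_div_iff {a b : ℝ} (ha : 0 ≤ a) (hb : 0 ≤ b) {m n : ℕ}
    (hm : m ≠ 0) (hn : n ≠ 0) :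
    a ^ ((1 : ℝ) / m) < b ^ ((1 : ℝ) / n) ↔ a ^ n < b ^ m := by
  have hm' : (m : ℝ) ≠ 0 := Nat.cast_ne_zero.mpr hm
  have hn' : (n : ℝ) ≠ 0 := Nat.cast_ne_zero.mpr hn
  rw [← pow_lt_pow_iff_left₀ (by positivity) (by positivity) (Nat.mul_ne_zero hm hn),
    ← Real.rpow_natCast, ← Real.rpow_natCast, ← Real.rpow_mul ha, ← Real.rpow_mul hb]
  push_cast
  rw [show 1 / (m : ℝ) * (m * n) = n by field_simp, show 1 / (n : ℝ) * (m * n) = m by field_simp,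
    Real.rpow_natCast, Real.rpow_natCast]

theorem apply_add_mul_eq_of_recursion {l l' : ℕ} [NeZero l] [NeZero l'] {r : Fin l → ℂ}
    {s : Fin l' → ℂ} (hs : ∀ j, s j ≠ 0) {lam : ℂ} {x : ℕ → ℂ}
    (hrec : ∀ k : ℕ, r k * x k + s k * x (k + 1) = lam * x k) (k : ℕ) :
    x (k + l * l') = ((∏ i, (lam - r i)) ^ l' / (∏ j, s j) ^ l) • x k := by
  have hS : ∏ j, s j ≠ 0 := Finset.prod_ne_zero_iff.mpr fun j _ ↦ hs j
  have hblock := prod_range_mul_eq_of_mul_succ_eq (α := fun j ↦ lam - r j) (β := fun j ↦ s j)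
    (y := x) (fun k ↦ by linear_combination hrec k) k (l * l')
  have hP := prod_range_mul_natCast_add (fun i ↦ lam - r i) k l'
  rw [mul_comm l' l] at hP
  rw [prod_range_mul_natCast_add (fun j ↦ s j), hP] at hblock
  rw [smul_eq_mul, div_mul_eq_mul_div, eq_div_iff (pow_ne_zero _ hS), ← hblock, mul_comm]

theorem norm_prod_pow_div_prod_pow_lt_one_iff {l l' : ℕ} [NeZero l] [NeZero l'] (a : Fin l → ℂ)
    {b : Fin l' → ℂ} (hb : ∀ j, b j ≠ 0) :
    ‖(∏ i, a i) ^ l' / (∏ j, b j) ^ l‖ < 1 ↔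
      (∏ i, ‖a i‖) ^ ((1 : ℝ) / l) < (∏ j, ‖b j‖) ^ ((1 : ℝ) / l') := by
  have hB : 0 < ∏ j, ‖b j‖ := Finset.prod_pos fun j _ ↦ norm_pos_iff.mpr (hb j)
  rw [norm_div, norm_pow, norm_pow, norm_prod, norm_prod, div_lt_one (pow_pos hB l),
    rpow_one_div_lt_rpow_one_div_iff (by positivity) hB.le (NeZero.ne l) (NeZero.ne l')]

/-- The point spectrum of the adjoint `B*` acting on `ℓ¹` (the transposed matrix,
`(B*x)_k = r_{k mod l + 1} x_k + s_{k mod l' + 1} x_{k+1}`) equals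
`{λ : (|λ-r₁|⋯|λ-r_l|)^{1/l} < (|s₁|⋯|s_{l'}|)^{1/l'}}`. -/
theorem stmt_6 (l l' : ℕ) [NeZero l] [NeZero l'] (r : Fin l → ℂ) (s : Fin l' → ℂ)
    (hs : ∀ j, s j ≠ 0) (lam : ℂ) :
    (∃ x : ℕ → ℂ, x ≠ 0 ∧ Memℓp x 1 ∧
        ∀ k : ℕ, r (↑k) * x k + s (↑k) * x (k + 1) = lam * x k) ↔
      (∏ i, ‖lam - r i‖) ^ ((1 : ℝ) / l) <
        (∏ j, ‖s j‖) ^ ((1 : ℝ) / l') := by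
  rw [← norm_prod_pow_div_prod_pow_lt_one_iff (fun i ↦ lam - r i) hs]
  constructor
  · rintro ⟨x, hx0, hx1, hrec⟩
    exact ((summable_norm_iff_of_add_period_eq_smul (apply_add_mul_eq_of_recursion hs hrec)).1
      (memℓp_one_iff_summable_norm.1 hx1)).resolve_right hx0
  · intro h
    set x : ℕ → ℂ := fun k ↦ ∏ j ∈ Finset.range k, (lam - r j) / s j
    have hrec : ∀ k : ℕ, r k * x k + s k * x (k + 1) = lam * x k := fun k ↦ by
      linear_combination mul_succ_prod_range_div (α := fun j ↦ lam - r j) (β := fun j ↦ s j)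
        (fun _ ↦ hs _) k
    refine ⟨x, fun hx ↦ by simpa [x] using congrFun hx 0, ?_, hrec⟩
    exact memℓp_one_iff_summable_norm.2
      ((summable_norm_iff_of_add_period_eq_smul (apply_add_mul_eq_of_recursion hs hrec)).2
        (.inl h))
end

section
/- For each i ∈ {1,…,l}, the adjoint operator (B − r_i I)* (acting on ℓ¹ via the transposed matrix) is surjective. -/
/-!
Solve `T x = y` forward: `x 0 = 0` and `x (k + 1) = (y k - (r k - r i) x k) / s k`. The
coefficient `r k - r i` vanishes whenever `k ≡ i (mod l)`, so the recursion restarts from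
`y k / s k` at least once every `l` steps. Hence `‖x (n + l)‖` is bounded by a fixed multiple
of `‖y n‖ + ⋯ + ‖y (n + l - 1)‖`, a finite sum of shifts of a summable sequence, and `x ∈ ℓ¹`.
-/

open Fin.NatCast Finset

theorem exists_lt_add_mod_eq {l i : ℕ} (hi : i < l) (n : ℕ) : ∃ a < l, (n + a) % l = i := by
  have hl : 0 < l := by omega
  have hdiv := Nat.div_add_mod n l
  have hmod := Nat.mod_lt n hl
  set m := l * (n / l)
  by_cases h : n ≤ m + i
  · refine ⟨m + i - n, by omega, ?_⟩
    rw [show n + (m + i - n) = i + l * (n / l) by omega, Nat.add_mul_mod_self_left,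
      Nat.mod_eq_of_lt hi]
  · refine ⟨m + l + i - n, by omega, ?_⟩
    rw [show n + (m + l + i - n) = i + l * (n / l + 1) by rw [mul_add]; omega,
      Nat.add_mul_mod_self_left, Nat.mod_eq_of_lt hi]

theorem summable_of_le_mul_sum_shift {u v : ℕ → ℝ} (hu : ∀ n, 0 ≤ u n) (hv : Summable v)
    (C : ℝ) (L : ℕ) (h : ∀ n, u (n + L) ≤ C * ∑ d ∈ range L, v (n + d)) : Summable u := by
  have hshift : Summable fun n => C * ∑ d ∈ range L, v (n + d) :=
    (summable_sum fun d _ => (summable_nat_add_iff d).mpr hv).mul_left C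
  exact (summable_nat_add_iff L).mp (hshift.of_nonneg_of_le (fun n => hu _) h)

section Recurrence

variable {u v : ℕ → ℝ} {M : ℝ}

theorem le_pow_mul_sum_of_le_add_mul (hM : 1 ≤ M) (hv : ∀ k, 0 ≤ v k)
    (hstep : ∀ k, u (k + 1) ≤ v k + M * u k) {k : ℕ} (hk : u (k + 1) ≤ v k) (t : ℕ) :
    u (k + 1 + t) ≤ M ^ t * ∑ j ∈ range (t + 1), v (k + j) := by
  induction t with
  | zero => simpa using hk
  | succ t ih =>
    have hpow : 1 ≤ M ^ (t + 1) := one_le_pow₀ hM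
    calc u (k + 1 + (t + 1)) ≤ v (k + (t + 1)) + M * u (k + 1 + t) := by
          rw [← add_assoc, ← add_assoc, add_right_comm k]; exact hstep _
      _ ≤ M ^ (t + 1) * v (k + (t + 1)) + M * (M ^ t * ∑ j ∈ range (t + 1), v (k + j)) := by
          gcongr
          exact le_mul_of_one_le_left (hv _) hpow
      _ = M ^ (t + 1) * ∑ j ∈ range (t + 1 + 1), v (k + j) := by
          rw [sum_range_succ (fun j => v (k + j)) (t + 1), pow_succ]; ring

theorem le_pow_mul_sum_window_of_le_add_mul (hM : 1 ≤ M) (hv : ∀ k, 0 ≤ v k)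
    (hstep : ∀ k, u (k + 1) ≤ v k + M * u k) {l i : ℕ} (hi : i < l)
    (hreset : ∀ k, k % l = i → u (k + 1) ≤ v k) (n : ℕ) :
    u (n + l) ≤ M ^ l * ∑ d ∈ range l, v (n + d) := by
  obtain ⟨a, hal, ha⟩ := exists_lt_add_mod_eq hi n
  have hbound := le_pow_mul_sum_of_le_add_mul hM hv hstep (hreset _ ha) (l - 1 - a)
  rw [show n + a + 1 + (l - 1 - a) = n + l by omega, show l - 1 - a + 1 = l - a by omega] at hbound
  have hwindow : ∑ j ∈ range (l - a), v (n + a + j) ≤ ∑ d ∈ range l, v (n + d) := by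
    calc ∑ j ∈ range (l - a), v (n + a + j) = ∑ d ∈ Ico a l, v (n + d) := by
          rw [sum_Ico_eq_sum_range]; simp only [add_assoc]
      _ ≤ ∑ d ∈ range l, v (n + d) :=
          sum_le_sum_of_subset_of_nonneg (fun d hd => by simp at hd ⊢; omega) fun d _ _ => hv _
  calc u (n + l) ≤ M ^ (l - 1 - a) * ∑ j ∈ range (l - a), v (n + a + j) := hbound
    _ ≤ M ^ l * ∑ d ∈ range l, v (n + d) :=
      mul_le_mul (pow_le_pow_right₀ hM (by omega)) hwindow (sum_nonneg fun j _ => hv _)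
        (by positivity)

end Recurrence

section ForwardSolve

variable {𝕜 : Type*} [NormedField 𝕜]

def forwardSolve (a b y : ℕ → 𝕜) : ℕ → 𝕜
  | 0 => 0
  | k + 1 => (y k - a k * forwardSolve a b y k) / b k

variable {a b y : ℕ → 𝕜}

theorem forwardSolve_spec (hb : ∀ k, b k ≠ 0) (k : ℕ) :
    a k * forwardSolve a b y k + b k * forwardSolve a b y (k + 1) = y k := by
  rw [forwardSolve, mul_div_cancel₀ _ (hb k)]
  ring

theorem norm_forwardSolve_succ_le (k : ℕ) :
    ‖forwardSolve a b y (k + 1)‖ ≤ ‖y k / b k‖ + ‖a k / b k‖ * ‖forwardSolve a b y k‖ := by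
  rw [forwardSolve, sub_div, mul_div_right_comm, ← norm_mul]
  exact norm_sub_le _ _

theorem forwardSolve_succ_of_eq_zero {k : ℕ} (hk : a k = 0) :
    forwardSolve a b y (k + 1) = y k / b k := by
  rw [forwardSolve, hk, zero_mul, sub_zero]

theorem summable_norm_forwardSolve {M : ℝ} (hM : ∀ k, ‖a k / b k‖ ≤ M)
    (hy : Summable fun k => ‖y k / b k‖) {l i : ℕ} (hi : i < l) (ha : ∀ k, k % l = i → a k = 0) :
    Summable fun k => ‖forwardSolve a b y k‖ := by
  have hstep (k : ℕ) : ‖forwardSolve a b y (k + 1)‖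
      ≤ ‖y k / b k‖ + max M 1 * ‖forwardSolve a b y k‖ :=
    (norm_forwardSolve_succ_le k).trans <| add_le_add_right
      (mul_le_mul_of_nonneg_right ((hM k).trans (le_max_left _ _)) (norm_nonneg _)) _
  have hreset (k : ℕ) (hk : k % l = i) : ‖forwardSolve a b y (k + 1)‖ ≤ ‖y k / b k‖ :=
    (congrArg norm (forwardSolve_succ_of_eq_zero (ha k hk))).le
  exact summable_of_le_mul_sum_shift (fun _ => norm_nonneg _) hy _ l
    (le_pow_mul_sum_window_of_le_add_mul (u := fun k => ‖forwardSolve a b y k‖) (le_max_right _ _)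
      (fun _ => norm_nonneg _) hstep hi hreset)

end ForwardSolve

/-- For each `i`, the adjoint `(B - r_i I)*`, acting on `ℓ¹` via the transposed
matrix `(Tx)_k = (r_{k mod l + 1} − r_i) x_k + s_{k mod l' + 1} x_{k+1}`, is surjective. -/
theorem stmt_11 (l l' : ℕ) [NeZero l] [NeZero l'] (r : Fin l → ℂ) (s : Fin l' → ℂ)
    (hs : ∀ j, s j ≠ 0) (i : Fin l) :
    ∀ y : ℕ → ℂ, Memℓp y 1 → ∃ x : ℕ → ℂ, Memℓp x 1 ∧
      ∀ k : ℕ, (r (↑k) - r i) * x k + s (↑k) * x (k + 1) = y k := by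
  intro y hy
  have hmem {z : ℕ → ℂ} : Memℓp z 1 ↔ Summable fun k => ‖z k‖ := by
    simp [memℓp_gen_iff (p := 1) (by norm_num)]
  obtain ⟨M, hM⟩ := Finite.bddAbove_range fun jj : Fin l × Fin l' => ‖(r jj.1 - r i) / s jj.2‖
  obtain ⟨B, hB⟩ := Finite.bddAbove_range fun j : Fin l' => ‖s j‖⁻¹
  have hys : Summable fun k => ‖y k / s k‖ := by
    refine ((hmem.mp hy).mul_right B).of_nonneg_of_le (fun _ => norm_nonneg _) fun k => ?_
    rw [norm_div, div_eq_mul_inv]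
    exact mul_le_mul_of_nonneg_left (hB ⟨_, rfl⟩) (norm_nonneg _)
  have hreset (k : ℕ) (hk : k % l = i.val) : r k - r i = 0 := by
    rw [sub_eq_zero]; congr; ext; simpa [Fin.val_natCast] using hk
  refine ⟨forwardSolve (fun k => r k - r i) (fun k => s k) y, hmem.mpr ?_,
    forwardSolve_spec fun k => hs k⟩
  exact summable_norm_forwardSolve (fun k => hM ⟨(k, k), rfl⟩) hys i.isLt hreset
end
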